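/- arXiv:2104.14092 — 7 statements merged into one kernel-verified Lean document; each statement's English description precedes it below -/
import Mathlib

section
/- Let p be an odd prime, a ∈ ℤ_p \ ℤ_{≤0}, and x, y ∈ ℤ_{≥0} with x + y + a ≡ 0 mod p^n. With f_x = ℓ_x − ⌊ℓ_x/p⌋ where ℓ_x ∈ {0,...,p−1} satisfies x ≡ ℓ_x mod p (and similarly for y), one has (−1)^{f_x} {1}_x / {a}_x ≡ (−1)^{f_y} {1}_y / {a}_y mod p^n. -/
open Finset Classical
noncomputable section

/-- `{α}_n = ∏_{1 ≤ i ≤ n, p ∤ (α+i-1)} (α+i-1)`. -/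
def sprod (p : ℕ) [Fact p.Prime] (α : ℤ_[p]) (n : ℕ) : ℤ_[p] :=
  ∏ i ∈ Finset.range n, if (p : ℤ_[p]) ∣ (α + (i : ℤ_[p])) then 1 else (α + (i : ℤ_[p]))

namespace SprodAux

variable (p : ℕ) [Fact p.Prime]

/-- `-1` if `p ∤ k`, else `1`. -/
def sgn (k : ℕ) : ℤ_[p] := if p ∣ k then 1 else -1

/-- `k` if `p ∤ k`, else `1`. -/
def ff (k : ℕ) : ℤ_[p] := if p ∣ k then 1 else (k : ℤ_[p])

lemma dvd_cast_iff (m : ℕ) : (p : ℤ_[p]) ∣ (m : ℤ_[p]) ↔ p ∣ m := by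
  have hc : ((m : ℤ) : ℤ_[p]) = (m : ℤ_[p]) := by push_cast; ring
  rw [← PadicInt.norm_lt_one_iff_dvd, ← hc, PadicInt.norm_int_lt_one_iff_dvd,
    Int.natCast_dvd_natCast]

lemma prod_sgn (m : ℕ) :
    ∏ i ∈ Finset.range m, sgn p (i + 1) = (-1 : ℤ_[p]) ^ (m - m / p) := by
  induction m with
  | zero => simp
  | succ m ih =>
    rw [Finset.prod_range_succ, ih, sgn]
    have hdle : m / p ≤ m := Nat.div_le_self m p
    rcases _root_.em (p ∣ (m + 1)) with h | h
    · rw [if_pos h, Nat.succ_div, if_pos h, mul_one]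
      congr 1
      omega
    · rw [if_neg h, Nat.succ_div, if_neg h,
        show m + 1 - (m / p + 0) = (m - m / p) + 1 from by omega, pow_succ]

lemma even_aux (hodd : Odd p) (x : ℕ) : Even (x % p + (x - x / p)) := by
  obtain ⟨k, hk⟩ := hodd
  obtain ⟨M, hM⟩ : ∃ M, x % p + (2 * M + x / p) = x :=
    ⟨k * (x / p), by
      have h := Nat.mod_add_div x p
      calc x % p + (2 * (k * (x / p)) + x / p) = x % p + (2 * k + 1) * (x / p) := by ring
        _ = x % p + p * (x / p) := by rw [hk]
        _ = x := h⟩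
  have h2 : x / p ≤ x := Nat.div_le_self x p
  rw [Nat.even_iff]
  omega

lemma hsign (hodd : Odd p) (z : ℕ) :
    (-1 : ℤ_[p]) ^ (z % p) * (-1) ^ (z - z / p) = 1 := by
  rw [← pow_add]
  exact Even.neg_one_pow (even_aux p hodd z)

lemma sprod_one (x : ℕ) : sprod p 1 x = ∏ i ∈ Finset.range x, ff p (i + 1) := by
  apply Finset.prod_congr rfl
  intro i _
  have hc : (1 : ℤ_[p]) + (i : ℤ_[p]) = ((i + 1 : ℕ) : ℤ_[p]) := by push_cast; ring
  simp only [ff, hc]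
  rcases _root_.em (p ∣ (i + 1)) with h | h
  · rw [if_pos ((dvd_cast_iff p _).mpr h), if_pos h]
  · rw [if_neg (fun hh => h ((dvd_cast_iff p _).mp hh)), if_neg h]

lemma psq (m : ℕ) :
    (∏ i ∈ Finset.range m, sgn p (i + 1)) * (∏ i ∈ Finset.range m, sgn p (i + 1)) = 1 := by
  rw [prod_sgn, ← pow_add]
  exact Even.neg_one_pow ⟨_, rfl⟩

lemma hS (hodd : Odd p) (u v : ℕ) :
    (-1 : ℤ_[p]) ^ (u % p) * ∏ i ∈ Finset.range v, sgn p (u + 1 + i)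
      = (-1) ^ ((u + v) - (u + v) / p) := by
  have h1 : (∏ i ∈ Finset.range u, sgn p (i + 1)) * ∏ i ∈ Finset.range v, sgn p (u + 1 + i)
      = ∏ i ∈ Finset.range (u + v), sgn p (i + 1) := by
    rw [Finset.prod_range_add]
    congr 1
    apply Finset.prod_congr rfl
    intro i _
    congr 1
    omega
  calc (-1 : ℤ_[p]) ^ (u % p) * ∏ i ∈ Finset.range v, sgn p (u + 1 + i)
      = (-1) ^ (u % p) *
        (((∏ i ∈ Finset.range u, sgn p (i + 1)) * ∏ i ∈ Finset.range u, sgn p (i + 1)) *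
          ∏ i ∈ Finset.range v, sgn p (u + 1 + i)) := by rw [psq, one_mul]
    _ = ((-1) ^ (u % p) * ∏ i ∈ Finset.range u, sgn p (i + 1)) *
        ((∏ i ∈ Finset.range u, sgn p (i + 1)) * ∏ i ∈ Finset.range v, sgn p (u + 1 + i)) := by
        ring
    _ = 1 * ∏ i ∈ Finset.range (u + v), sgn p (i + 1) := by
        rw [h1, prod_sgn, hsign p hodd]
    _ = (-1) ^ ((u + v) - (u + v) / p) := by rw [one_mul, prod_sgn]

lemma hcomb (hodd : Odd p) (u v : ℕ) :
    (-1 : ℤ_[p]) ^ (u % p) * (∏ i ∈ Finset.range u, ff p (i + 1)) *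
      ((∏ i ∈ Finset.range v, sgn p (u + 1 + i)) * ∏ i ∈ Finset.range v, ff p (u + 1 + i))
      = (-1) ^ ((u + v) - (u + v) / p) * ∏ i ∈ Finset.range (u + v), ff p (i + 1) := by
  have hf : (∏ i ∈ Finset.range u, ff p (i + 1)) * ∏ i ∈ Finset.range v, ff p (u + 1 + i)
      = ∏ i ∈ Finset.range (u + v), ff p (i + 1) := by
    rw [Finset.prod_range_add]
    congr 1
    apply Finset.prod_congr rfl
    intro i _
    congr 1
    omega
  calc (-1 : ℤ_[p]) ^ (u % p) * (∏ i ∈ Finset.range u, ff p (i + 1)) *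
        ((∏ i ∈ Finset.range v, sgn p (u + 1 + i)) * ∏ i ∈ Finset.range v, ff p (u + 1 + i))
      = ((-1 : ℤ_[p]) ^ (u % p) * ∏ i ∈ Finset.range v, sgn p (u + 1 + i)) *
        ((∏ i ∈ Finset.range u, ff p (i + 1)) * ∏ i ∈ Finset.range v, ff p (u + 1 + i)) := by
        ring
    _ = (-1) ^ ((u + v) - (u + v) / p) * ∏ i ∈ Finset.range (u + v), ff p (i + 1) := by
        rw [hS p hodd, hf]

end SprodAux

open SprodAux in
/-- Lemma 3.4 of the paper (odd p): if `x + y + a ≡ 0 mod p^n` then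
`(-1)^{f_x} {1}_x / {a}_x ≡ (-1)^{f_y} {1}_y / {a}_y mod p^n`, where
`f_x = ℓ_x - ⌊ℓ_x/p⌋` with `ℓ_x = x % p`.  Since `{a}_x, {a}_y` are p-adic
units, the congruence of quotients is stated in the equivalent cross-multiplied
form. -/
theorem sprod_ratio_congr (p : ℕ) [Fact p.Prime] (hodd : Odd p)
    (a : ℤ_[p]) (ha : ∀ m : ℕ, a ≠ -(m : ℤ_[p])) (n x y : ℕ)
    (hxy : (p : ℤ_[p]) ^ n ∣ ((x : ℤ_[p]) + (y : ℤ_[p]) + a)) :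
    (p : ℤ_[p]) ^ n ∣
      ((-1 : ℤ_[p]) ^ (x % p - (x % p) / p) * sprod p 1 x * sprod p a y
        - (-1 : ℤ_[p]) ^ (y % p - (y % p) / p) * sprod p 1 y * sprod p a x) := by
  rcases Nat.eq_zero_or_pos n with rfl | hn
  · simpa using one_dvd _
  have hp : p.Prime := Fact.out
  rw [Nat.div_eq_of_lt (Nat.mod_lt x hp.pos), Nat.div_eq_of_lt (Nat.mod_lt y hp.pos),
    Nat.sub_zero, Nat.sub_zero]
  set I : Ideal ℤ_[p] := Ideal.span {(p : ℤ_[p]) ^ n} with hI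
  rw [← Ideal.mem_span_singleton (α := ℤ_[p]), ← hI, ← Ideal.Quotient.eq]
  set π := Ideal.Quotient.mk I with hπ
  -- key congruence
  have key : ∀ u v : ℕ, (p : ℤ_[p]) ^ n ∣ ((u : ℤ_[p]) + (v : ℤ_[p]) + a) →
      π (sprod p a v) =
        π ((∏ i ∈ Finset.range v, sgn p (u + 1 + i)) *
            ∏ i ∈ Finset.range v, ff p (u + 1 + i)) := by
    intro u v huv
    have hd : (p : ℤ_[p]) ∣ ((u : ℤ_[p]) + (v : ℤ_[p]) + a) :=
      dvd_trans (dvd_pow_self _ hn.ne') huv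
    rw [← Finset.prod_mul_distrib]
    simp only [sprod, map_prod]
    rw [← Finset.prod_range_reflect (fun i => π (sgn p (u + 1 + i) * ff p (u + 1 + i))) v]
    apply Finset.prod_congr rfl
    intro i hi
    have hi' : i < v := Finset.mem_range.mp hi
    rw [show u + 1 + (v - 1 - i) = u + v - i from by omega]
    set k := u + v - i with hkdef
    have hki : (k : ℤ_[p]) + (i : ℤ_[p]) = (u : ℤ_[p]) + (v : ℤ_[p]) := by
      have h' : k + i = u + v := by omega
      exact_mod_cast congrArg (Nat.cast : ℕ → ℤ_[p]) h'
    have hsum : a + (i : ℤ_[p]) + (k : ℤ_[p]) = (u : ℤ_[p]) + (v : ℤ_[p]) + a := by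
      linear_combination hki
    have hdvd_iff : (p : ℤ_[p]) ∣ (a + (i : ℤ_[p])) ↔ p ∣ k := by
      rw [← dvd_cast_iff p k]
      have hsub : (p : ℤ_[p]) ∣ (a + (i : ℤ_[p]) + (k : ℤ_[p])) := by rw [hsum]; exact hd
      constructor
      · intro h
        have := dvd_sub hsub h
        simpa using this
      · intro h
        have := dvd_sub hsub h
        simpa using this
    rcases _root_.em (p ∣ k) with hpk | hpk
    · rw [if_pos (hdvd_iff.mpr hpk)]
      simp [sgn, ff, hpk]
    · rw [if_neg (fun hh => hpk (hdvd_iff.mp hh))]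
      simp only [sgn, ff, if_neg hpk]
      rw [hπ, Ideal.Quotient.eq, hI, Ideal.mem_span_singleton]
      have : a + (i : ℤ_[p]) - (-1) * (k : ℤ_[p]) = (u : ℤ_[p]) + (v : ℤ_[p]) + a := by
        linear_combination hki
      rw [this]
      exact huv
  have hxy' : (p : ℤ_[p]) ^ n ∣ ((y : ℤ_[p]) + (x : ℤ_[p]) + a) := by
    rwa [show (y : ℤ_[p]) + (x : ℤ_[p]) + a = (x : ℤ_[p]) + (y : ℤ_[p]) + a from by ring]
  have hL : π ((-1 : ℤ_[p]) ^ (x % p) * sprod p 1 x * sprod p a y)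
      = π ((-1) ^ ((x + y) - (x + y) / p) * ∏ i ∈ Finset.range (x + y), ff p (i + 1)) := by
    rw [map_mul, map_mul, key x y hxy, sprod_one, ← map_mul, ← map_mul, hcomb p hodd]
  have hR : π ((-1 : ℤ_[p]) ^ (y % p) * sprod p 1 y * sprod p a x)
      = π ((-1) ^ ((y + x) - (y + x) / p) * ∏ i ∈ Finset.range (y + x), ff p (i + 1)) := by
    rw [map_mul, map_mul, key y x hxy', sprod_one, ← map_mul, ← map_mul, hcomb p hodd]
  rw [hL, hR, Nat.add_comm y x]

end
end

section
/- Let p be an odd prime, a ∈ ℤ_p, z a nonnegative integer divisible by p, and 0 ≤ ℓ_x ≤ ℓ_y ≤ p−1. If a + (z+ℓ_x) + (z+ℓ_y) ≡ 0 mod p^n, then ({1}_{z+ℓ_y}/{a}_{z+ℓ_y}) / ({1}_{z+ℓ_x}/{a}_{z+ℓ_x}) ≡ (−1)^{ℓ_y−ℓ_x} mod p^n. -/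
open Finset Classical
noncomputable section

lemma sprod_add_aux (p : ℕ) [Fact p.Prime] (α : ℤ_[p]) (m d : ℕ)
    (hnd : ∀ j < d, ¬ (p : ℤ_[p]) ∣ (α + ((m + j : ℕ) : ℤ_[p]))) :
    sprod p α (m + d) = sprod p α m * ∏ j ∈ Finset.range d, (α + ((m + j : ℕ) : ℤ_[p])) := by
  unfold sprod
  rw [Finset.prod_range_add]
  congr 1
  exact Finset.prod_congr rfl fun j hj => if_neg (hnd j (Finset.mem_range.mp hj))

lemma padic_cast_dvd_iff (p : ℕ) [Fact p.Prime] (k : ℕ) :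
    (p : ℤ_[p]) ∣ (k : ℤ_[p]) ↔ p ∣ k := by
  have h1 : ((k : ℤ) : ℤ_[p]) = (k : ℤ_[p]) := by push_cast; rfl
  rw [← PadicInt.norm_lt_one_iff_dvd, ← h1, PadicInt.norm_int_lt_one_iff_dvd,
    Int.natCast_dvd_natCast]

/-- Case (1) in the proof of Lemma 3.4 (odd p): for `p | z`,
`0 ≤ ℓ_x ≤ ℓ_y ≤ p-1` and `a + (z+ℓ_x) + (z+ℓ_y) ≡ 0 mod p^n`, one has
`({1}_{z+ℓ_y}/{a}_{z+ℓ_y}) / ({1}_{z+ℓ_x}/{a}_{z+ℓ_x}) ≡ (-1)^{ℓ_y-ℓ_x} mod p^n`,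
stated in the equivalent cross-multiplied form (all denominators are units). -/
theorem sprod_ratio_case1 (p n : ℕ) [Fact p.Prime] (hodd : Odd p)
    (a : ℤ_[p]) (ha : ∀ m : ℕ, a ≠ -(m : ℤ_[p]))
    (z lx ly : ℕ) (hz : p ∣ z) (hxy : lx ≤ ly) (hly : ly ≤ p - 1)
    (h : (p : ℤ_[p]) ^ n ∣ (a + ((z + lx : ℕ) : ℤ_[p]) + ((z + ly : ℕ) : ℤ_[p]))) :
    (p : ℤ_[p]) ^ n ∣
      (sprod p 1 (z + ly) * sprod p a (z + lx)
        - (-1 : ℤ_[p]) ^ (ly - lx) * sprod p 1 (z + lx) * sprod p a (z + ly)) := by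
  rcases Nat.eq_zero_or_pos n with rfl | hn
  · simp only [pow_zero]; exact one_dvd _
  have hp : p.Prime := Fact.out
  have hp2 : 2 ≤ p := hp.two_le
  set d := ly - lx with hd
  have hzly : z + ly = (z + lx) + d := by omega
  obtain ⟨t, rfl⟩ := hz
  -- natural-number non-divisibility helper
  have hnat : ∀ c : ℕ, 0 < c → c < p → ¬ p ∣ (p * t + c) := by
    intro c hc1 hc2 hdvd
    have h2 : p ∣ c := (Nat.dvd_add_right (Dvd.intro t rfl)).mp hdvd
    exact absurd (Nat.le_of_dvd hc1 h2) (by omega)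
  -- p ∣ the level-1 congruence
  have h1 : (p : ℤ_[p]) ∣ (a + ((p * t + lx : ℕ) : ℤ_[p]) + ((p * t + ly : ℕ) : ℤ_[p])) :=
    dvd_trans (dvd_pow_self _ hn.ne') h
  -- non-divisibility of the `1`-factors
  have hnd1 : ∀ j < d, ¬ (p : ℤ_[p]) ∣ ((1 : ℤ_[p]) + (((p * t + lx) + j : ℕ) : ℤ_[p])) := by
    intro j hj hdvd
    have e : (1 : ℤ_[p]) + (((p * t + lx) + j : ℕ) : ℤ_[p]) = ((p * t + (lx + j + 1) : ℕ) : ℤ_[p]) := by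
      push_cast; ring
    rw [e, padic_cast_dvd_iff] at hdvd
    exact hnat _ (by omega) (by omega) hdvd
  -- non-divisibility of the `a`-factors
  have hnda : ∀ j < d, ¬ (p : ℤ_[p]) ∣ (a + (((p * t + lx) + j : ℕ) : ℤ_[p])) := by
    intro j hj hdvd
    have h2 : (p : ℤ_[p]) ∣ ((p * t + (ly - j) : ℕ) : ℤ_[p]) := by
      have e : ((p * t + (ly - j) : ℕ) : ℤ_[p]) =
          (a + ((p * t + lx : ℕ) : ℤ_[p]) + ((p * t + ly : ℕ) : ℤ_[p]))
            - (a + (((p * t + lx) + j : ℕ) : ℤ_[p])) := by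
        push_cast [Nat.cast_sub (show j ≤ ly by omega)]; ring
      rw [e]; exact dvd_sub h1 hdvd
    rw [padic_cast_dvd_iff] at h2
    exact hnat _ (by omega) (by omega) h2
  rw [hzly, sprod_add_aux p 1 (p * t + lx) d hnd1, sprod_add_aux p a (p * t + lx) d hnda]
  set m := p * t + lx with hm
  set P := ∏ j ∈ Finset.range d, ((1 : ℤ_[p]) + ((m + j : ℕ) : ℤ_[p])) with hP
  set Q := ∏ j ∈ Finset.range d, (a + ((m + j : ℕ) : ℤ_[p])) with hQdef
  set R := ∏ j ∈ Finset.range d, (-(((p * t + ly - j : ℕ)) : ℤ_[p])) with hRdef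
  -- Q ≡ R mod p^n
  have hQ : (p : ℤ_[p]) ^ n ∣ Q - R := by
    set I : Ideal ℤ_[p] := Ideal.span {(p : ℤ_[p]) ^ n} with hI
    have hmk : (Ideal.Quotient.mk I) Q = (Ideal.Quotient.mk I) R := by
      rw [hQdef, hRdef, map_prod, map_prod]
      refine Finset.prod_congr rfl fun j hj => ?_
      have hj' : j < d := Finset.mem_range.mp hj
      rw [Ideal.Quotient.eq, hI, Ideal.mem_span_singleton]
      have e : (a + ((m + j : ℕ) : ℤ_[p])) - (-(((p * t + ly - j : ℕ)) : ℤ_[p])) =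
          a + ((p * t + lx : ℕ) : ℤ_[p]) + ((p * t + ly : ℕ) : ℤ_[p]) := by
        rw [hm]
        push_cast [Nat.cast_sub (show j ≤ p * t + ly by omega)]; ring
      rw [e]; exact h
    have := Ideal.Quotient.eq.mp hmk
    rwa [hI, Ideal.mem_span_singleton] at this
  -- R = (-1)^d * P
  have hR : R = (-1 : ℤ_[p]) ^ d * P := by
    rw [hRdef, hP]
    rw [show (∏ j ∈ Finset.range d, (-(((p * t + ly - j : ℕ)) : ℤ_[p]))) =
        ∏ j ∈ Finset.range d, ((-1 : ℤ_[p]) * (((p * t + ly - j : ℕ)) : ℤ_[p])) by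
      exact Finset.prod_congr rfl fun j _ => by ring]
    rw [Finset.prod_mul_distrib, Finset.prod_const, Finset.card_range]
    congr 1
    have refl : ∀ j ∈ Finset.range d,
        (((p * t + ly - j : ℕ)) : ℤ_[p]) = (1 : ℤ_[p]) + ((m + (d - 1 - j) : ℕ) : ℤ_[p]) := by
      intro j hj
      have hj' : j < d := Finset.mem_range.mp hj
      have e : p * t + ly - j = m + (d - 1 - j) + 1 := by omega
      rw [e]; push_cast; ring
    rw [Finset.prod_congr rfl refl]
    exact Finset.prod_range_reflect (fun j => (1 : ℤ_[p]) + ((m + j : ℕ) : ℤ_[p])) d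
  have hsq : ((-1 : ℤ_[p]) ^ d) * ((-1 : ℤ_[p]) ^ d) = 1 := by
    rw [← pow_add]; exact Even.neg_one_pow ⟨d, rfl⟩
  have key : (p : ℤ_[p]) ^ n ∣ P - (-1 : ℤ_[p]) ^ d * Q := by
    have heq : P - (-1 : ℤ_[p]) ^ d * Q = (-1 : ℤ_[p]) ^ d * (R - Q) := by
      rw [hR, mul_sub, ← mul_assoc, hsq, one_mul]
    rw [heq]
    exact Dvd.dvd.mul_left (by simpa [neg_sub] using dvd_neg.mpr hQ) _
  have heq2 : (sprod p 1 m * P) * sprod p a m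
      - (-1 : ℤ_[p]) ^ d * sprod p 1 m * (sprod p a m * Q)
      = (sprod p 1 m * sprod p a m) * (P - (-1 : ℤ_[p]) ^ d * Q) := by ring
  rw [heq2]
  exact key.mul_left _

end
end

section
/- Let p be an odd prime, a ∈ ℤ_p, z ≥ 0 with p | z, and 0 ≤ ℓ_x ≤ ℓ_y ≤ p−1. If a + (z+ℓ_x) + (z+p+ℓ_y) ≡ 0 mod p^n, then ({1}_{z+p+ℓ_y}/{a}_{z+p+ℓ_y}) / ({1}_{z+ℓ_x}/{a}_{z+ℓ_x}) ≡ (−1)^{ℓ_y−ℓ_x} mod p^n. -/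
open Finset Classical
noncomputable section

lemma aux_dvd_natCast (p : ℕ) [Fact p.Prime] (m : ℕ) :
    (p : ℤ_[p]) ∣ ((m : ℕ) : ℤ_[p]) ↔ p ∣ m := by
  rw [← PadicInt.norm_lt_one_iff_dvd]
  have h2 := PadicInt.norm_int_lt_one_iff_dvd (p := p) (m : ℤ)
  push_cast at h2
  rw [h2, Int.natCast_dvd_natCast]

lemma aux_prod_sub {R : Type*} [CommRing R] {ι : Type*} (c : R) (s : Finset ι)
    (f g : ι → R) (h : ∀ i ∈ s, c ∣ f i - g i) :
    c ∣ ∏ i ∈ s, f i - ∏ i ∈ s, g i := by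
  classical
  induction s using Finset.induction_on with
  | empty => simp
  | @insert x s hx ih =>
    rw [Finset.prod_insert hx, Finset.prod_insert hx]
    have h1 : c ∣ f x - g x := h x (Finset.mem_insert_self x s)
    have h2 : c ∣ ∏ i ∈ s, f i - ∏ i ∈ s, g i :=
      ih fun i hi => h i (Finset.mem_insert_of_mem hi)
    obtain ⟨u, hu⟩ := h1
    obtain ⟨v, hv⟩ := h2
    refine ⟨u * ∏ i ∈ s, g i + f x * v, ?_⟩
    linear_combination (∏ i ∈ s, g i) * hu + (f x) * hv

/-- The key congruence on the "tail" products over an interval of length `p + (ly - lx)`. -/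
lemma aux_tail (p n : ℕ) [Fact p.Prime] (hodd : Odd p) (a : ℤ_[p])
    (m K lx ly : ℕ) (hn : 0 < n) (hz : p ∣ m - lx) (hlxm : lx ≤ m)
    (hxy : lx ≤ ly) (hly : ly ≤ p - 1) (hK : K = p + (ly - lx))
    (hcd : (p : ℤ_[p]) ^ n ∣ (a + (m : ℤ_[p]) + ((m + K : ℕ) : ℤ_[p]))) :
    (p : ℤ_[p]) ^ n ∣
      ((∏ i ∈ Finset.range K,
          if (p : ℤ_[p]) ∣ ((1 : ℤ_[p]) + ((m + i : ℕ) : ℤ_[p])) then 1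
          else (1 : ℤ_[p]) + ((m + i : ℕ) : ℤ_[p]))
        - (-1 : ℤ_[p]) ^ (ly - lx) *
          ∏ i ∈ Finset.range K,
            if (p : ℤ_[p]) ∣ (a + ((m + i : ℕ) : ℤ_[p])) then 1
            else a + ((m + i : ℕ) : ℤ_[p])) := by
  have hp : p.Prime := Fact.out
  have hp2 : 2 ≤ p := hp.two_le
  set d := ly - lx with hd
  set c : ℤ_[p] := a + (m : ℤ_[p]) + ((m + K : ℕ) : ℤ_[p]) with hc
  have hpc : (p : ℤ_[p]) ∣ c := dvd_trans (dvd_pow_self _ hn.ne') hcd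
  -- per-factor congruence
  have factor : ∀ i ∈ Finset.range K,
      (p : ℤ_[p]) ^ n ∣
        (if (p : ℤ_[p]) ∣ (a + ((m + i : ℕ) : ℤ_[p])) then 1
          else a + ((m + i : ℕ) : ℤ_[p]))
        - ((if p ∣ (m + K - i) then (1 : ℤ_[p]) else -1) *
            (if (p : ℤ_[p]) ∣ ((1 : ℤ_[p]) + ((m + (K - 1 - i) : ℕ) : ℤ_[p])) then 1
              else (1 : ℤ_[p]) + ((m + (K - 1 - i) : ℕ) : ℤ_[p]))) := by
    intro i hi
    rw [Finset.mem_range] at hi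
    have e1 : a + ((m + i : ℕ) : ℤ_[p]) = c - ((m + K - i : ℕ) : ℤ_[p]) := by
      have hnat : (m + i) + (m + K - i) = m + (m + K) := by omega
      have hcast : ((m + i : ℕ) : ℤ_[p]) + ((m + K - i : ℕ) : ℤ_[p])
          = (m : ℤ_[p]) + ((m + K : ℕ) : ℤ_[p]) := by
        rw [← Nat.cast_add, ← Nat.cast_add, hnat]
      rw [hc]; linear_combination hcast
    have e2 : (1 : ℤ_[p]) + ((m + (K - 1 - i) : ℕ) : ℤ_[p]) = ((m + K - i : ℕ) : ℤ_[p]) := by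
      rw [show m + K - i = (m + (K - 1 - i)) + 1 from by omega]
      push_cast; ring
    have hiff : (p : ℤ_[p]) ∣ (a + ((m + i : ℕ) : ℤ_[p])) ↔ p ∣ (m + K - i) := by
      rw [e1, dvd_sub_right hpc, aux_dvd_natCast]
    by_cases hdv : p ∣ (m + K - i)
    · rw [if_pos (hiff.2 hdv), if_pos hdv, if_pos, one_mul, sub_self]
      · exact dvd_zero _
      · rw [e2, aux_dvd_natCast]; exact hdv
    · rw [if_neg (fun hx => hdv (hiff.1 hx)), if_neg hdv, if_neg, e1, e2]
      · have : c - ((m + K - i : ℕ) : ℤ_[p]) - -1 * ((m + K - i : ℕ) : ℤ_[p]) = c := by ring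
        rw [this]; exact hcd
      · rw [e2, aux_dvd_natCast]; exact hdv
  have stepA :
      (p : ℤ_[p]) ^ n ∣
        (∏ i ∈ Finset.range K,
          if (p : ℤ_[p]) ∣ (a + ((m + i : ℕ) : ℤ_[p])) then 1
          else a + ((m + i : ℕ) : ℤ_[p]))
        - ∏ i ∈ Finset.range K,
            ((if p ∣ (m + K - i) then (1 : ℤ_[p]) else -1) *
              (if (p : ℤ_[p]) ∣ ((1 : ℤ_[p]) + ((m + (K - 1 - i) : ℕ) : ℤ_[p])) then 1
                else (1 : ℤ_[p]) + ((m + (K - 1 - i) : ℕ) : ℤ_[p]))) :=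
    aux_prod_sub _ _ _ _ factor
  -- evaluate the second product
  have hbprod :
      (∏ i ∈ Finset.range K,
        ((if p ∣ (m + K - i) then (1 : ℤ_[p]) else -1) *
          (if (p : ℤ_[p]) ∣ ((1 : ℤ_[p]) + ((m + (K - 1 - i) : ℕ) : ℤ_[p])) then 1
            else (1 : ℤ_[p]) + ((m + (K - 1 - i) : ℕ) : ℤ_[p]))))
      = (-1 : ℤ_[p]) ^ d *
          ∏ i ∈ Finset.range K,
            (if (p : ℤ_[p]) ∣ ((1 : ℤ_[p]) + ((m + i : ℕ) : ℤ_[p])) then 1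
              else (1 : ℤ_[p]) + ((m + i : ℕ) : ℤ_[p])) := by
    rw [Finset.prod_mul_distrib]
    have r1 := Finset.prod_range_reflect
      (fun j => if (p : ℤ_[p]) ∣ ((1 : ℤ_[p]) + ((m + j : ℕ) : ℤ_[p])) then 1
        else (1 : ℤ_[p]) + ((m + j : ℕ) : ℤ_[p])) K
    rw [r1]
    congr 1
    -- sign product
    have r2 : (∏ i ∈ Finset.range K, (if p ∣ (m + K - i) then (1 : ℤ_[p]) else -1))
        = ∏ j ∈ Finset.range K, (if p ∣ (m + 1 + j) then (1 : ℤ_[p]) else -1) := by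
      rw [← Finset.prod_range_reflect
        (fun j => if p ∣ (m + 1 + j) then (1 : ℤ_[p]) else -1) K]
      apply Finset.prod_congr rfl
      intro i hi
      rw [Finset.mem_range] at hi
      congr 2
      omega
    have j0lt : p - 1 - lx < K := by omega
    have hdiv : ∀ j < K, (p ∣ (m + 1 + j) ↔ j = p - 1 - lx) := by
      intro j hj
      obtain ⟨k, hk⟩ := hz
      have hrw : m + 1 + j = p * k + (lx + 1 + j) := by omega
      rw [hrw, Nat.dvd_add_right ⟨k, rfl⟩]
      constructor
      · intro hdv
        have hne : lx + 1 + j ≠ 0 := by omega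
        have hlt : lx + 1 + j < 2 * p := by omega
        have := Nat.eq_of_dvd_of_lt_two_mul hne hdv hlt
        omega
      · intro hj0
        rw [show lx + 1 + j = p from by omega]
    have r3 : (∏ j ∈ Finset.range K, (if p ∣ (m + 1 + j) then (1 : ℤ_[p]) else -1))
        = ∏ j ∈ Finset.range K,
            ((-1 : ℤ_[p]) * (if j = p - 1 - lx then -1 else 1)) := by
      apply Finset.prod_congr rfl
      intro j hj
      rw [Finset.mem_range] at hj
      by_cases hj0 : j = p - 1 - lx
      · rw [if_pos ((hdiv j hj).2 hj0), if_pos hj0]; ring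
      · rw [if_neg (fun hx => hj0 ((hdiv j hj).1 hx)), if_neg hj0]; ring
    rw [r2, r3, Finset.prod_mul_distrib, Finset.prod_const, Finset.card_range,
      Finset.prod_ite_eq' (Finset.range K) (p - 1 - lx) (fun _ => (-1 : ℤ_[p])),
      if_pos (Finset.mem_range.2 j0lt)]
    have hKpow : ((-1 : ℤ_[p])) ^ K = -(-1 : ℤ_[p]) ^ d := by
      rw [hK, pow_add, hodd.neg_one_pow]; ring
    rw [hKpow]; ring
  rw [hbprod] at stepA
  obtain ⟨c0, hc0⟩ := stepA
  refine ⟨-((-1 : ℤ_[p]) ^ d * c0), ?_⟩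
  have hu : ((-1 : ℤ_[p]) ^ d) * ((-1 : ℤ_[p]) ^ d) = 1 := by
    rcases Nat.even_or_odd d with hd2 | hd2 <;> simp [hd2.neg_one_pow]
  linear_combination (-((-1 : ℤ_[p]) ^ d)) * hc0 -
    (∏ i ∈ Finset.range K,
      (if (p : ℤ_[p]) ∣ ((1 : ℤ_[p]) + ((m + i : ℕ) : ℤ_[p])) then 1
        else (1 : ℤ_[p]) + ((m + i : ℕ) : ℤ_[p]))) * hu

/-- Case (2) in the proof of Lemma 3.4 (odd p): for `p | z`,
`0 ≤ ℓ_x ≤ ℓ_y ≤ p-1` and `a + (z+ℓ_x) + (z+p+ℓ_y) ≡ 0 mod p^n`, one has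
`({1}_{z+p+ℓ_y}/{a}_{z+p+ℓ_y}) / ({1}_{z+ℓ_x}/{a}_{z+ℓ_x}) ≡ (-1)^{ℓ_y-ℓ_x} mod p^n`,
stated in the equivalent cross-multiplied form (all denominators are units). -/
theorem sprod_ratio_case2 (p n : ℕ) [Fact p.Prime] (hodd : Odd p)
    (a : ℤ_[p]) (ha : ∀ m : ℕ, a ≠ -(m : ℤ_[p]))
    (z lx ly : ℕ) (hz : p ∣ z) (hxy : lx ≤ ly) (hly : ly ≤ p - 1)
    (h : (p : ℤ_[p]) ^ n ∣
      (a + ((z + lx : ℕ) : ℤ_[p]) + ((z + p + ly : ℕ) : ℤ_[p]))) :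
    (p : ℤ_[p]) ^ n ∣
      (sprod p 1 (z + p + ly) * sprod p a (z + lx)
        - (-1 : ℤ_[p]) ^ (ly - lx) * sprod p 1 (z + lx) * sprod p a (z + p + ly)) := by
  rcases Nat.eq_zero_or_pos n with rfl | hn
  · simpa using dvd_refl (1 : ℤ_[p])
  set m := z + lx with hm
  set K := p + (ly - lx) with hK
  have hM : z + p + ly = m + K := by omega
  have split : ∀ α : ℤ_[p], sprod p α (m + K) = sprod p α m *
      ∏ i ∈ Finset.range K, (if (p : ℤ_[p]) ∣ (α + ((m + i : ℕ) : ℤ_[p])) then 1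
        else α + ((m + i : ℕ) : ℤ_[p])) := by
    intro α
    rw [sprod, sprod, Finset.prod_range_add]
  rw [hM] at h ⊢
  rw [split 1, split a]
  have key := aux_tail p n hodd a m K lx ly hn (by rw [hm, Nat.add_sub_cancel]; exact hz) (by omega) hxy hly hK h
  obtain ⟨c0, hc0⟩ := key
  refine ⟨sprod p 1 m * sprod p a m * c0, ?_⟩
  linear_combination (sprod p 1 m * sprod p a m) * hc0

end
end

section
/- Let F_a(t) = ∑_k ((a)_k/k!)^s t^k with coefficients A_k, and F_{a'}(t) with coefficients A^{(1)}_k where a' is the Dwork prime. Then for every k ≥ 1 with p | k, A^{(1)}_{k/p} / A_k = ({1}_k / {a}_k)^s. -/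
/-!
Among the factors `a + i`, `i < pm`, of `(a)_{pm}`, the ones divisible by `p` are exactly those
with `i ≡ l (mod p)`, and `a + (pj + l) = p (a' + j)`. Hence `(a)_{pm} = {a}_{pm} p^m (a')_m`, and
the case `a = a' = 1`, `l = p - 1` reads `(pm)! = {1}_{pm} p^m m!`. Dividing the first identity
by the second gives the claim after raising to the `s`-th power.
-/

open Finset Classical
noncomputable section

lemma ascPochhammer_eval_eq_prod_range {R : Type*} [CommSemiring R] (n : ℕ) (r : R) :
    (ascPochhammer R n).eval r = ∏ j ∈ range n, (r + j) := by
  induction n with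
  | zero => simp
  | succ n ih => rw [ascPochhammer_succ_eval, ih, prod_range_succ]

lemma prod_filter_range_mul_mod_eq {M : Type*} [CommMonoid M] (f : ℕ → M) {p l : ℕ}
    (hl : l < p) (m : ℕ) :
    ∏ i ∈ (range (p * m)).filter (· % p = l), f i = ∏ j ∈ range m, f (p * j + l) := by
  have hp : 0 < p := by omega
  refine prod_nbij' (· / p) (fun j ↦ p * j + l) ?_ ?_ ?_ ?_ ?_
  · intro i hi
    simp only [mem_filter, mem_range] at hi ⊢
    exact Nat.div_lt_of_lt_mul hi.1
  · intro j hj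
    simp only [mem_filter, mem_range] at hj ⊢
    refine ⟨?_, by rw [Nat.mul_add_mod, Nat.mod_eq_of_lt hl]⟩
    calc p * j + l < p * (j + 1) := by rw [mul_add]; omega
      _ ≤ p * m := Nat.mul_le_mul_left p hj
  · intro i hi
    simp only [mem_filter] at hi
    rw [← hi.2, Nat.div_add_mod]
  · intro j _
    rw [Nat.mul_add_div hp, Nat.div_eq_of_lt hl, add_zero]
  · intro i hi
    simp only [mem_filter] at hi
    rw [← hi.2, Nat.div_add_mod]

namespace PadicInt

variable {p : ℕ} [Fact p.Prime]

lemma coe_ascPochhammer_eval (n : ℕ) (x : ℤ_[p]) :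
    (((ascPochhammer ℤ_[p] n).eval x : ℤ_[p]) : ℚ_[p])
      = (ascPochhammer ℚ_[p] n).eval (x : ℚ_[p]) := by
  rw [ascPochhammer_eval₂ Coe.ringHom]
  exact (Polynomial.eval₂_at_apply Coe.ringHom x).symm

lemma natCast_dvd_add_natCast_iff {α α' : ℤ_[p]} {l : ℕ} (hl : l < p)
    (hla : α + l = p * α') (i : ℕ) : (p : ℤ_[p]) ∣ α + i ↔ i % p = l := by
  have hsplit : α + i = p * α' + (((i : ℤ) - l : ℤ) : ℤ_[p]) := by
    push_cast
    rw [← hla]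
    ring
  rw [hsplit, dvd_add_right (dvd_mul_right _ _), ← norm_lt_one_iff_dvd,
    norm_int_lt_one_iff_dvd, ← Nat.modEq_iff_dvd, Nat.ModEq, Nat.mod_eq_of_lt hl, eq_comm]

theorem ascPochhammer_eval_mul_eq_sprod_mul {α α' : ℤ_[p]} {l : ℕ} (hl : l < p)
    (hla : α + l = p * α') (m : ℕ) :
    (ascPochhammer ℤ_[p] (p * m)).eval α
      = sprod p α (p * m) * p ^ m * (ascPochhammer ℤ_[p] m).eval α' := by
  have hdvd := natCast_dvd_add_natCast_iff hl hla
  have hsprod : sprod p α (p * m) = ∏ i ∈ (range (p * m)).filter (· % p ≠ l), (α + i) := by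
    simp only [sprod, hdvd, prod_ite, prod_const_one, one_mul]
  have hdiv : ∏ i ∈ (range (p * m)).filter (· % p = l), (α + i)
      = p ^ m * ∏ j ∈ range m, (α' + j) := by
    rw [prod_filter_range_mul_mod_eq _ hl, ← card_range m, ← prod_const, card_range,
      ← prod_mul_distrib]
    refine prod_congr rfl fun j _ ↦ ?_
    push_cast
    linear_combination hla
  rw [ascPochhammer_eval_eq_prod_range, ascPochhammer_eval_eq_prod_range, mul_assoc, ← hdiv,
    hsprod]
  exact (prod_filter_not_mul_prod_filter _ _ _).symm

theorem factorial_mul_eq_sprod_one_mul (m : ℕ) :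
    (((p * m).factorial : ℕ) : ℤ_[p]) = sprod p 1 (p * m) * p ^ m * m.factorial := by
  have hp := (Fact.out : p.Prime).one_lt
  have h : (1 : ℤ_[p]) + ((p - 1 : ℕ) : ℤ_[p]) = p * 1 := by
    rw [Nat.cast_sub hp.le]; ring
  simpa using ascPochhammer_eval_mul_eq_sprod_mul (by omega : p - 1 < p) h m

end PadicInt

open PadicInt in
theorem coeff_ratio_eq_sprod_pow_general (p s : ℕ) [Fact p.Prime]
    (a a' : ℤ_[p])
    (l : ℕ) (hl : l < p) (hla : a + (l : ℤ_[p]) = (p : ℤ_[p]) * a')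
    (A A1 : ℕ → ℤ_[p])
    (hA : ∀ k, (A k : ℚ_[p]) =
      ((ascPochhammer ℚ_[p] k).eval (a : ℚ_[p]) / (k.factorial : ℚ_[p])) ^ s)
    (hA1 : ∀ k, (A1 k : ℚ_[p]) =
      ((ascPochhammer ℚ_[p] k).eval (a' : ℚ_[p]) / (k.factorial : ℚ_[p])) ^ s)
    (k : ℕ) (hpk : p ∣ k) :
    (A1 (k / p) : ℚ_[p]) * ((sprod p a k : ℤ_[p]) : ℚ_[p]) ^ s
      = (A k : ℚ_[p]) * ((sprod p 1 k : ℤ_[p]) : ℚ_[p]) ^ s := by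
  obtain ⟨m, rfl⟩ := hpk
  have hpoch : (((ascPochhammer ℤ_[p] (p * m)).eval a : ℤ_[p]) : ℚ_[p])
      = sprod p a (p * m) * p ^ m * (((ascPochhammer ℤ_[p] m).eval a' : ℤ_[p]) : ℚ_[p]) := by
    exact_mod_cast congrArg ((↑) : ℤ_[p] → ℚ_[p]) (ascPochhammer_eval_mul_eq_sprod_mul hl hla m)
  have hfact : (((p * m).factorial : ℕ) : ℚ_[p])
      = sprod p 1 (p * m) * p ^ m * (m.factorial : ℚ_[p]) := by
    exact_mod_cast congrArg ((↑) : ℤ_[p] → ℚ_[p]) (factorial_mul_eq_sprod_one_mul (p := p) m)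
  obtain ⟨⟨hsprod_ne, hpow_ne⟩, hfact_ne⟩ := by
    simpa only [hfact, mul_ne_zero_iff] using
      (Nat.cast_ne_zero.mpr (Nat.factorial_ne_zero (p * m)) : (_ : ℚ_[p]) ≠ 0)
  rw [Nat.mul_div_cancel_left m (Fact.out : p.Prime).pos, hA, hA1, ← coe_ascPochhammer_eval,
    ← coe_ascPochhammer_eval, ← mul_pow, ← mul_pow, hpoch, hfact]
  congr 1
  field_simp

/-- Asakura's Lemma 3.6: with `A_k = ((a)_k/k!)^s` and `A^{(1)}_k = ((a')_k/k!)^s`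
(`a'` the Dwork prime), for `k ≥ 1` with `p | k` one has
`A^{(1)}_{k/p} / A_k = ({1}_k / {a}_k)^s`, stated in the equivalent
cross-multiplied form in `ℚ_p` (denominators are nonzero). -/
theorem coeff_ratio_eq_sprod_pow (p s : ℕ) [Fact p.Prime] (hs : 1 ≤ s)
    (a a' : ℤ_[p]) (ha : ∀ m : ℕ, a ≠ -(m : ℤ_[p]))
    (l : ℕ) (hl : l < p) (hla : a + (l : ℤ_[p]) = (p : ℤ_[p]) * a')
    (A A1 : ℕ → ℤ_[p])
    (hA : ∀ k, (A k : ℚ_[p]) =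
      ((ascPochhammer ℚ_[p] k).eval (a : ℚ_[p]) / (k.factorial : ℚ_[p])) ^ s)
    (hA1 : ∀ k, (A1 k : ℚ_[p]) =
      ((ascPochhammer ℚ_[p] k).eval (a' : ℚ_[p]) / (k.factorial : ℚ_[p])) ^ s)
    (k : ℕ) (hk : 1 ≤ k) (hpk : p ∣ k) :
    (A1 (k / p) : ℚ_[p]) * ((sprod p a k : ℤ_[p]) : ℚ_[p]) ^ s
      = (A k : ℚ_[p]) * ((sprod p 1 k : ℤ_[p]) : ℚ_[p]) ^ s :=
  coeff_ratio_eq_sprod_pow_general p s a a' l hl hla A A1 hA hA1 k hpk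

end
end

section
/- For a = 1 and p = 2, Dwork's hypergeometric function with s = 1 satisfies F_1(t)/F_{1}(t^2) = 1 + t, and (−1)·t^l·(value at t^{-1}) = −(1+t) ≠ 1+t, where l = 1; hence the transformation formula 𝓕^Dw_a(t) = ((−1)^s t)^l 𝓕^Dw_a(t^{-1}) fails for p = 2, s = 1, a = 1. -/
/-!
Over any coefficient ring, `∑ tᵏ = (1 + t) ∑ t²ᵏ`: the odd powers in the geometric series are
`t` times the even ones. The sign claim `-(1 + t) ≠ 1 + t` is read off the constant coefficient,
where it becomes `-1 ≠ 1`, true because `ℤ₂` has characteristic zero.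
-/

namespace PowerSeries

variable {R : Type*}

theorem mk_one_eq_one_add_X_mul_mk_ite_two_dvd [Semiring R] :
    mk (fun _ => (1 : R)) = (1 + X) * mk fun k => if 2 ∣ k then 1 else 0 := by
  ext (_ | m)
  · simp
  · rw [add_mul, one_mul, map_add, coeff_succ_X_mul]
    simp only [coeff_mk]
    by_cases h : 2 ∣ m
    · rw [if_neg (by omega), if_pos h, zero_add]
    · rw [if_pos (by omega), if_neg h, add_zero]

theorem neg_one_add_X_ne_one_add_X [Ring R] [Nontrivial R] (hR : ringChar R ≠ 2) :
    -(1 + X : R⟦X⟧) ≠ 1 + X := fun h =>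
  hR <| neg_one_eq_one_iff.mp <| by simpa using congrArg constantCoeff h

end PowerSeries

/-- For `p = 2`, `s = 1`, `a = 1`: Dwork's hypergeometric function is
`𝓕^Dw_1(t) = F_1(t)/F_1(t^2) = 1 + t` (i.e. `F_1(t) = (1+t)·F_1(t^2)` with
`F_1(t) = ∑_k t^k` and `F_1(t^2) = ∑_k t^{2k}`), while
`((-1)·t)^l 𝓕^Dw_1(t⁻¹) = -t(1 + t⁻¹) = -(1+t) ≠ 1 + t` (here `l = 1`), so the
transformation formula `𝓕^Dw_a(t) = ((-1)^s t)^l 𝓕^Dw_a(t⁻¹)` fails for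
`p = 2`, `s = 1`, `a = 1`. -/
theorem dwork_transformation_fails_p2 :
    (PowerSeries.mk fun _ : ℕ => (1 : ℤ_[2]))
        = (1 + PowerSeries.X)
          * (PowerSeries.mk fun k : ℕ => if 2 ∣ k then (1 : ℤ_[2]) else 0)
      ∧ -(1 + (PowerSeries.X : PowerSeries ℤ_[2])) ≠ 1 + PowerSeries.X :=
  ⟨PowerSeries.mk_one_eq_one_add_X_mul_mk_ite_two_dvd,
    PowerSeries.neg_one_add_X_ne_one_add_X (by simp [ringChar.eq_zero])⟩
end

section
/- Let β: ℤ_p → ℤ_p and β̂: ℤ_p → ℤ_p be the continuous extensions of k ↦ B_k/A_k and k ↦ B̂_k/A_k respectively (which exist by the congruences B_k/A_k ≡ B_{k'}/A_{k'} mod p^n when k ≡ k' mod p^n). Then for p ∤ b with b a positive integer, β(b) = 1/b and β̂(−b−a) = −1/b, hence β(b) + β̂(−b−a) = 0. -/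
open Classical

/-- The case `p ∤ b` in the proof of Lemma 3.2 of the paper: for a positive
integer `b` prime to `p`, `β(b) = 1/b` and `β̂(-b-a) = -1/b`, hence
`β(b) + β̂(-b-a) = 0`. -/
theorem beta_add_betahat_of_not_dvd
    (p s : ℕ) [Fact p.Prime] (hs : 1 ≤ s)
    (a a' : ℤ_[p]) (ha : ∀ m : ℕ, a ≠ -(m : ℤ_[p]))
    (l : ℕ) (hl : l < p) (hla : a + (l : ℤ_[p]) = (p : ℤ_[p]) * a')
    -- `q = p` for odd `p`, `q = 4` for `p = 2`; `e = l' - ⌊l'/p⌋` with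
    -- `l' ∈ {0,...,q-1}`, `a + l' ≡ 0 mod q`
    (q l' e : ℕ) (hq : q = if p = 2 then 4 else p)
    (hl' : l' < q) (hql' : (q : ℤ_[p]) ∣ (a + (l' : ℤ_[p]))) (he : e = l' - l' / p)
    (c : ℤ_[p]) (hc : (p : ℤ_[p]) ∣ (c - 1))
    -- `cpow α = c^α` is the continuous extension of `m ↦ c^m` to `α ∈ ℤ_p`
    (cpow : ℤ_[p] → ℤ_[p]) (hcpow_nat : ∀ m : ℕ, cpow (m : ℤ_[p]) = c ^ m)
    (hcpow_cont : Continuous cpow)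
    -- coefficients `A_k = ((a)_k/k!)^s`, `A⁽¹⁾_k = ((a')_k/k!)^s`
    (A A1 : ℕ → ℤ_[p])
    (hA : ∀ k, (A k : ℚ_[p]) =
      ((ascPochhammer ℚ_[p] k).eval (a : ℚ_[p]) / (k.factorial : ℚ_[p])) ^ s)
    (hA1 : ∀ k, (A1 k : ℚ_[p]) =
      ((ascPochhammer ℚ_[p] k).eval (a' : ℚ_[p]) / (k.factorial : ℚ_[p])) ^ s)
    -- `B_k = (A_k - c^{k/p} A⁽¹⁾_{k/p})/k` (for `σ(t) = c t^p`)
    (B : ℕ → ℤ_[p])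
    (hB : ∀ k : ℕ, 0 < k → (k : ℤ_[p]) * B k
      = A k - (if p ∣ k then c ^ (k / p) * A1 (k / p) else 0))
    -- `B̂_k = (A_k - (-1)^{se} A⁽¹⁾_{(k-l)/p} (c⁻¹)^{(k+a)/p})/(k+a)`
    -- (for `σ̂(t) = c⁻¹ t^p`); note `(k+a)/p = (k-l)/p + a'` when `p ∣ k - l`
    (Bh : ℕ → ℤ_[p])
    (hBh : ∀ k : ℕ, ((k : ℤ_[p]) + a) * Bh k
      = A k - (-1 : ℤ_[p]) ^ (s * e) *
          (if l ≤ k ∧ p ∣ (k - l) then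
            cpow (-((((k - l) / p : ℕ) : ℤ_[p]) + a')) * A1 ((k - l) / p) else 0))
    -- `β, β̂ : ℤ_p → ℤ_p` are the continuous (p-adic) interpolations of
    -- `k ↦ B_k/A_k` and `k ↦ B̂_k/A_k`
    (β βh : ℤ_[p] → ℤ_[p]) (hβc : Continuous β) (hβhc : Continuous βh)
    (hβ : ∀ k : ℕ, 0 < k → β (k : ℤ_[p]) * A k = B k)
    (hβh : ∀ k : ℕ, 0 < k → βh (k : ℤ_[p]) * A k = Bh k)
    (b : ℕ) (hb : 0 < b) (hpb : ¬ p ∣ b) :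
    (b : ℤ_[p]) * β (b : ℤ_[p]) = 1
      ∧ (b : ℤ_[p]) * βh (-(b : ℤ_[p]) - a) = -1
      ∧ β (b : ℤ_[p]) + βh (-(b : ℤ_[p]) - a) = 0 := by
  
  have hp : p.Prime := Fact.out
  -- A k ≠ 0 for all k
  have hAne : ∀ k, A k ≠ 0 := by
    intro k hk0
    have h := hA k
    rw [hk0] at h
    simp only [PadicInt.coe_zero] at h
    have := h.symm
    rw [pow_eq_zero_iff (by omega : s ≠ 0), div_eq_zero_iff] at this
    rcases this with h1 | h1
    · rw [ascPochhammer_eval_eq_zero_iff] at h1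
      obtain ⟨m, _, hm⟩ := h1
      apply ha m
      have h2 : ((a : ℚ_[p])) = -(m : ℚ_[p]) := by linear_combination hm
      have h3 : ((a : ℚ_[p])) = ((-(m : ℤ_[p]) : ℤ_[p]) : ℚ_[p]) := by
        rw [h2]; push_cast; ring
      exact Subtype.coe_injective h3
    · exact Nat.cast_ne_zero.mpr (Nat.factorial_ne_zero k) h1
  have hbne : (b : ℤ_[p]) ≠ 0 := Nat.cast_ne_zero.mpr hb.ne'
  -- norm of b is 1
  have hbnorm : ‖(b : ℤ_[p])‖ = 1 := by
    rcases lt_or_eq_of_le ((b : ℤ_[p]).norm_le_one) with h | h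
    · exfalso
      rw [PadicInt.norm_lt_one_iff_dvd] at h
      apply hpb
      have : ((b : ℤ) : ℤ_[p]) = (b : ℤ_[p]) := by push_cast; ring
      rw [← this] at h
      have h2 : ‖((b : ℤ) : ℤ_[p])‖ < 1 := by
        rw [PadicInt.norm_lt_one_iff_dvd]; exact h
      rw [PadicInt.norm_int_lt_one_iff_dvd] at h2
      exact_mod_cast h2
    · exact h
  -- Part 1
  have part1 : (b : ℤ_[p]) * β (b : ℤ_[p]) = 1 := by
    have h1 := hB b hb
    rw [if_neg hpb, sub_zero] at h1
    have h2 := hβ b hb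
    have : ((b : ℤ_[p]) * β (b : ℤ_[p]) - 1) * A b = 0 := by
      linear_combination (b : ℤ_[p]) * h2 + h1
    rcases mul_eq_zero.mp this with h | h
    · exact sub_eq_zero.mp h
    · exact absurd h (hAne b)
  set x : ℤ_[p] := -(b : ℤ_[p]) - a with hx
  -- key: for naturals k close to x, (b) * βh k + 1 has norm = ‖k - x‖
  have key : ∀ k : ℕ, 0 < k → ‖(k : ℤ_[p]) - x‖ < 1 →
      ‖(b : ℤ_[p]) * βh (k : ℤ_[p]) + 1‖ = ‖(k : ℤ_[p]) - x‖ := by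
    intro k hk hclose
    have hkx : (k : ℤ_[p]) - x = (k : ℤ_[p]) + a + b := by rw [hx]; ring
    -- ‖k + a‖ = 1
    have hka : ‖(k : ℤ_[p]) + a‖ = 1 := by
      have hub : ‖(k : ℤ_[p]) + a‖ ≤ 1 := PadicInt.norm_le_one _
      rcases lt_or_eq_of_le hub with h | h
      · exfalso
        have : ‖(k : ℤ_[p]) + a + b‖ < 1 := by rw [← hkx]; exact hclose
        have hb1 : ‖(b : ℤ_[p])‖ < 1 := by
          have heq : (b : ℤ_[p]) = ((k : ℤ_[p]) + a + b) + (-((k : ℤ_[p]) + a)) := by ring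
          rw [heq]
          refine lt_of_le_of_lt (PadicInt.nonarchimedean _ _) (max_lt ‹_› ?_)
          rw [norm_neg]; exact h
        rw [hbnorm] at hb1; exact lt_irrefl _ hb1
      · exact h
    -- the if-condition fails
    have hif : ¬ (l ≤ k ∧ p ∣ (k - l)) := by
      rintro ⟨hlk, hdvd⟩
      have h1 : (p : ℤ_[p]) ∣ ((k - l : ℕ) : ℤ_[p]) := by
        exact_mod_cast Nat.cast_dvd_cast (α := ℤ_[p]) hdvd
      have h2 : ((k - l : ℕ) : ℤ_[p]) = (k : ℤ_[p]) - l := by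
        push_cast [Nat.cast_sub hlk]; ring
      have h3 : (p : ℤ_[p]) ∣ (k : ℤ_[p]) + a := by
        have heq : (k : ℤ_[p]) + a = ((k : ℤ_[p]) - l) + (a + l) := by ring
        rw [heq, ← h2, hla]
        exact dvd_add h1 (dvd_mul_right _ _)
      have := (PadicInt.norm_lt_one_iff_dvd _).mpr h3
      rw [hka] at this; exact lt_irrefl _ this
    have hBhk := hBh k
    rw [if_neg hif, mul_zero, sub_zero] at hBhk
    have hβhk := hβh k hk
    -- (k + a) * βh k = 1
    have hunit : ((k : ℤ_[p]) + a) * βh (k : ℤ_[p]) = 1 := by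
      have : (((k : ℤ_[p]) + a) * βh (k : ℤ_[p]) - 1) * A k = 0 := by
        rw [sub_mul, one_mul, mul_assoc, hβhk, hBhk, sub_self]
      rcases mul_eq_zero.mp this with h | h
      · exact sub_eq_zero.mp h
      · exact absurd h (hAne k)
    have hmul : ((k : ℤ_[p]) + a) * ((b : ℤ_[p]) * βh (k : ℤ_[p]) + 1)
        = (k : ℤ_[p]) - x := by
      rw [hkx]
      calc ((k : ℤ_[p]) + a) * ((b : ℤ_[p]) * βh (k : ℤ_[p]) + 1)
          = (b : ℤ_[p]) * (((k : ℤ_[p]) + a) * βh (k : ℤ_[p])) + ((k : ℤ_[p]) + a) := by ring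
        _ = (k : ℤ_[p]) + a + b := by rw [hunit]; ring
    calc ‖(b : ℤ_[p]) * βh (k : ℤ_[p]) + 1‖
        = ‖(k : ℤ_[p]) + a‖ * ‖(b : ℤ_[p]) * βh (k : ℤ_[p]) + 1‖ := by rw [hka, one_mul]
      _ = ‖((k : ℤ_[p]) + a) * ((b : ℤ_[p]) * βh (k : ℤ_[p]) + 1)‖ := (norm_mul _ _).symm
      _ = ‖(k : ℤ_[p]) - x‖ := by rw [hmul]
  -- construct approximating sequence
  have hex : ∀ n : ℕ, ∃ k : ℕ, 0 < k ∧ ‖(k : ℤ_[p]) - x‖ ≤ (p : ℝ) ^ (-(n + 1) : ℤ) := by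
    intro n
    have hpos : (0 : ℝ) < (p : ℝ) ^ (-(n + 1) : ℤ) := by
      apply zpow_pos
      exact_mod_cast hp.pos
    obtain ⟨K, hK⟩ := PadicInt.denseRange_natCast.exists_dist_lt x hpos
    refine ⟨K + p ^ (n + 1), ?_, ?_⟩
    · have := hp.pos; positivity
    have h1 : ((K + p ^ (n + 1) : ℕ) : ℤ_[p]) - x
        = ((K : ℤ_[p]) - x) + (p : ℤ_[p]) ^ (n + 1) := by push_cast; ring
    rw [h1]
    calc ‖((K : ℤ_[p]) - x) + (p : ℤ_[p]) ^ (n + 1)‖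
        ≤ max ‖(K : ℤ_[p]) - x‖ ‖(p : ℤ_[p]) ^ (n + 1)‖ := PadicInt.nonarchimedean _ _
      _ ≤ (p : ℝ) ^ (-(n + 1) : ℤ) := by
          apply max_le
          · rw [← dist_eq_norm, dist_comm]
            exact le_of_lt (by simpa [dist_eq_norm] using hK)
          · rw [PadicInt.norm_p_pow]
            norm_num
    done
  choose kseq hkpos hkdist using hex
  have hplt : (1 : ℝ) < (p : ℝ) := by exact_mod_cast hp.one_lt
  have hlt1 : ∀ n, ‖(kseq n : ℤ_[p]) - x‖ < 1 := by
    intro n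
    refine lt_of_le_of_lt (hkdist n) ?_
    refine zpow_lt_one_of_neg₀ hplt (by omega)
  -- limits
  have htend0 : Filter.Tendsto (fun n => ‖(kseq n : ℤ_[p]) - x‖) Filter.atTop (nhds 0) := by
    apply squeeze_zero (fun n => norm_nonneg _) hkdist
    have h0 : Filter.Tendsto (fun n : ℕ => ((p : ℝ)⁻¹) ^ n) Filter.atTop (nhds 0) := by
      apply tendsto_pow_atTop_nhds_zero_of_lt_one (by positivity)
      rw [inv_lt_one_iff₀]; right; exact hplt
    have h1 := h0.comp (Filter.tendsto_add_atTop_nat 1)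
    refine h1.congr fun n => ?_
    show ((p : ℝ)⁻¹) ^ (n + 1) = (p : ℝ) ^ (-(n + 1) : ℤ)
    rw [inv_pow, ← zpow_natCast, ← zpow_neg]
    norm_num
  have htendx : Filter.Tendsto (fun n => ((kseq n : ℤ_[p]))) Filter.atTop (nhds x) := by
    rw [tendsto_iff_norm_sub_tendsto_zero]
    exact htend0
  have htendA : Filter.Tendsto (fun n => (b : ℤ_[p]) * βh (kseq n : ℤ_[p])) Filter.atTop
      (nhds ((b : ℤ_[p]) * βh x)) :=
    ((continuous_const.mul hβhc).tendsto x).comp htendx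
  have htendB : Filter.Tendsto (fun n => (b : ℤ_[p]) * βh (kseq n : ℤ_[p])) Filter.atTop
      (nhds (-1)) := by
    rw [tendsto_iff_norm_sub_tendsto_zero]
    apply squeeze_zero (fun n => norm_nonneg _) (g := fun n => ‖(kseq n : ℤ_[p]) - x‖)
    · intro n
      rw [sub_neg_eq_add]
      exact le_of_eq (key (kseq n) (hkpos n) (hlt1 n))
    · exact htend0
  have part2 : (b : ℤ_[p]) * βh x = -1 := tendsto_nhds_unique htendA htendB
  refine ⟨part1, part2, ?_⟩
  have : (b : ℤ_[p]) * (β (b : ℤ_[p]) + βh x) = 0 := by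
    rw [mul_add, part1, part2]; ring
  rcases mul_eq_zero.mp this with h | h
  · exact absurd h hbne
  · exact h
end

section
/- Suppose that for all i ≥ 0 the transformation formula 𝓕^Dw_{a^{(i)}}(t) = ±((−1)^s t)^{l_i} 𝓕^Dw_{a^{(i)}}(t^{-1}) holds (mod p^n for all n, in the appropriate Laurent sense). Then for all n ≥ 1, 0 ≤ d ≤ n, 0 ≤ m ≤ p^n−1, and k ≥ 0: ∑_{i≡k mod p^{n−d}, 0≤i≤m, i+j=m} A_i A_{p^n−j−1} ≡ ∑_{p^n−j'−1 ≡ −k−a mod p^{n−d}, 0≤j'≤m, i'+j'=m} A_{i'} A_{p^n−j'−1} mod p^{d+1}. -/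
/-!
Fix `e = n - d`, let `u` generate the group ring `ℤ_p[ℤ/p^e]`, let `F` be `F_a` truncated below
`p^n`, `F*(t) = t^{p^n-1} F(1/t)`, and `L = l_0 + p l_1 + ⋯ + p^{e-1} l_{e-1}`, so that
`a + L = p^e a^{(e)}`. The `u^k`-coordinate of the `t^m`-coefficient of
`D_u = F(ut) F*(t) - u^{1+L} F*(ut) F(t)` is the difference of the two sums for the residue `k`,
so it suffices to show that all coefficients of `D_u` are divisible by `p^{n-e+1}`.

This holds for any `u` with `u^{p^e} = 1`, by induction on `e`. For `e = 0`, `u = 1` and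
`D_u = 0`. For the step, apply the inductive hypothesis to `a^{(1)}`, `n - 1` and `u^p`, substitute
`t ↦ t^p`, and combine it with the transformation formula at `t` and at `ut`: a ring identity
shows that `±u^{l_0} t^{l_0} D_u(t) G(t) G(ut)`, with `G(t) = F_{a^{(1)}}(t^p)` truncated, is a
combination of these three expressions, each divisible by `p^{n-e}`. The factors in front of
`D_u` are a unit, a power of `t`, and a polynomial with unit constant term, so they cancel.
-/

open Polynomial Classical

noncomputable section

namespace Polynomial

variable {S : Type*} [CommRing S]

theorem C_dvd_of_C_dvd_X_pow_mul {a : S} {f : S[X]} (l : ℕ) (h : C a ∣ X ^ l * f) :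
    C a ∣ f := by
  rw [C_dvd_iff_dvd_coeff] at h ⊢
  intro j
  simpa only [coeff_X_pow_mul] using h (j + l)

theorem C_dvd_of_C_dvd_mul_of_isUnit_coeff_zero {a : S} {f W : S[X]}
    (hW : IsUnit (W.coeff 0)) (h : C a ∣ f * W) : C a ∣ f := by
  rw [C_dvd_iff_dvd_coeff] at h ⊢
  intro j
  induction j using Nat.strong_induction_on with
  | _ j ih =>
    have hj : f.coeff j * W.coeff 0
        = (f * W).coeff j - ∑ i ∈ Finset.range j, f.coeff i * W.coeff (j - i) := by
      rw [coeff_mul, Finset.Nat.sum_antidiagonal_eq_sum_range_succ_mk, Finset.sum_range_succ,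
        Nat.sub_self]
      ring
    rw [← hW.dvd_mul_right, hj]
    exact dvd_sub (h j) (Finset.dvd_sum fun i hi => (ih i (Finset.mem_range.1 hi)).mul_right _)

theorem revAt_mul (p M n : ℕ) : revAt (p * M) (p * n) = p * revAt M n := by
  rcases le_or_gt n M with h | h
  · rw [revAt_le h, revAt_le (Nat.mul_le_mul_left p h), Nat.mul_sub]
  · rw [revAt_eq_self_of_lt h]
    rcases Nat.eq_zero_or_pos p with rfl | hp
    · simp
    · exact revAt_eq_self_of_lt (Nat.mul_lt_mul_of_pos_left h hp)

theorem reflect_expand (p M : ℕ) (g : S[X]) :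
    reflect (p * M) (expand S p g) = expand S p (reflect M g) := by
  induction g using Polynomial.induction_on' with
  | add f g hf hg => rw [map_add, reflect_add, hf, hg, reflect_add, map_add]
  | monomial n c =>
    rw [← C_mul_X_pow_eq_monomial, map_mul, expand_C, map_pow, expand_X, ← pow_mul,
      reflect_C_mul_X_pow, reflect_C_mul_X_pow, revAt_mul, map_mul, expand_C, map_pow,
      expand_X, ← pow_mul]

theorem reflect_expand_of_natDegree_le {p M : ℕ} {g : S[X]} (hg : g.natDegree ≤ M) :
    reflect (p - 1 + p * M) (expand S p g) = X ^ (p - 1) * expand S p (reflect M g) := by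
  rw [← one_mul (expand S p g),
    reflect_mul 1 _ (by simp) (by rw [natDegree_expand, mul_comm]; gcongr), reflect_one,
    reflect_expand]

variable {R S : Type*} [CommRing R] [CommRing S] [Algebra R S]

theorem coeff_aeval_C_mul_X (f : R[X]) (w : S) (j : ℕ) :
    (aeval (C w * X) f).coeff j = algebraMap R S (f.coeff j) * w ^ j := by
  rw [← aeval_map_algebraMap S, ← comp_eq_aeval, comp_C_mul_X_coeff, coeff_map]

theorem expand_aeval_C_mul_X (p : ℕ) (f : R[X]) (w : S) :
    expand S p (aeval (C (w ^ p) * X) f) = aeval (C w * X) (expand R p f) := by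
  have h := aeval_algHom_apply ((expand S p).restrictScalars R) (C (w ^ p) * X) f
  rw [AlgHom.coe_restrictScalars', map_mul, expand_C, expand_X] at h
  rw [expand_aeval, ← h, mul_pow, C_pow]

def truncPoly (b : ℕ → R) (N : ℕ) : R[X] :=
  ∑ k ∈ Finset.range N, C (b k) * X ^ k

theorem coeff_truncPoly (b : ℕ → R) (N j : ℕ) :
    (truncPoly b N).coeff j = if j < N then b j else 0 := by
  simp [truncPoly, finsetSum_coeff, coeff_C_mul, coeff_X_pow]

theorem natDegree_truncPoly_le (b : ℕ → R) (N : ℕ) : (truncPoly b N).natDegree ≤ N - 1 :=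
  natDegree_le_iff_coeff_eq_zero.2 fun j hj => by rw [coeff_truncPoly, if_neg (by omega)]

theorem coeff_reflect_truncPoly (b : ℕ → R) {N j : ℕ} (hj : j < N) :
    (reflect (N - 1) (truncPoly b N)).coeff j = b (N - 1 - j) := by
  rw [coeff_reflect, revAt_le (by omega), coeff_truncPoly, if_pos (by omega)]

theorem truncPoly_ite_dvd {p : ℕ} (hp : 0 < p) (b : ℕ → R) (M : ℕ) :
    truncPoly (fun k => if p ∣ k then b (k / p) else 0) (p * M) = expand R p (truncPoly b M) := by
  ext j
  rw [coeff_truncPoly, coeff_expand hp, coeff_truncPoly]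
  by_cases hj : p ∣ j
  · obtain ⟨q, rfl⟩ := hj
    simp [Nat.mul_div_cancel_left q hp, Nat.mul_lt_mul_left hp]
  · simp [hj]

theorem reflect_expand_truncPoly {p n : ℕ} (hp : 0 < p) (hn : 1 ≤ n) (b : ℕ → R) :
    reflect (p ^ n - 1) (expand R p (truncPoly b (p ^ (n - 1))))
      = X ^ (p - 1) * expand R p (reflect (p ^ (n - 1) - 1) (truncPoly b (p ^ (n - 1)))) := by
  have hM := Nat.one_le_pow (n - 1) p hp
  have hN : p ^ n - 1 = p - 1 + p * (p ^ (n - 1) - 1) := by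
    rw [← Nat.sub_add_cancel hn, pow_succ', Nat.add_sub_cancel, Nat.mul_sub, mul_one]
    have := Nat.le_mul_of_pos_right p hM
    omega
  rw [hN, reflect_expand_of_natDegree_le (natDegree_truncPoly_le _ _)]

end Polynomial

def ofDigitsFrom (p : ℕ) (l : ℕ → ℕ) (i e : ℕ) : ℕ :=
  Nat.ofDigits p ((List.range e).map fun j => l (i + j))

theorem ofDigitsFrom_succ (p : ℕ) (l : ℕ → ℕ) (i e : ℕ) :
    ofDigitsFrom p l i (e + 1) = l i + p * ofDigitsFrom p l (i + 1) e := by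
  simp only [ofDigitsFrom, List.range_succ_eq_map, List.map_cons, List.map_map, Nat.ofDigits_cons,
    add_zero]
  congr 3
  exact List.map_congr_left fun j _ => by simp [add_assoc, add_comm 1]

theorem add_ofDigitsFrom {R : Type*} [CommRing R] {p : ℕ} {a : ℕ → R} {l : ℕ → ℕ}
    (hla : ∀ i, a i + l i = p * a (i + 1)) (i e : ℕ) :
    a i + ofDigitsFrom p l i e = p ^ e * a (i + e) := by
  induction e generalizing i with
  | zero => simp [ofDigitsFrom]
  | succ e ih =>
    rw [ofDigitsFrom_succ, Nat.cast_add, Nat.cast_mul, ← add_assoc, hla, ← mul_add, ih,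
      show i + 1 + e = i + (e + 1) by omega]
    ring

section Defect

variable {R S : Type*} [CommRing R] [CommRing S] [Algebra R S]

def reflectDefect (f : R[X]) (N L : ℕ) (w : S) : S[X] :=
  aeval (C w * X) f * (reflect N f).map (algebraMap R S)
    - C (w ^ (1 + L)) * (aeval (C w * X) (reflect N f) * f.map (algebraMap R S))

/-- Conjecture 4.7 for every `a^{(i)}`, truncated below `p^n` and cleared of denominators, where
`A i` are the coefficients of `F_{a^{(i)}}` and `c` is the sign `±((-1)^s)^{l_i}`. -/
def DworkCongruence (π : R) (p : ℕ) (l : ℕ → ℕ) (A : ℕ → ℕ → R) : Prop :=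
  ∀ i n, 1 ≤ n → ∃ c : R, IsUnit c ∧
    C (π ^ n) ∣ truncPoly (A i) (p ^ n)
        * reflect (p ^ n - 1) (expand R p (truncPoly (A (i + 1)) (p ^ (n - 1))))
      - C c * X ^ l i * reflect (p ^ n - 1) (truncPoly (A i) (p ^ n))
        * expand R p (truncPoly (A (i + 1)) (p ^ (n - 1)))

theorem reflectDefect_one (f : R[X]) (N L : ℕ) : reflectDefect f N L (1 : S) = 0 := by
  simp [reflectDefect, aeval_X_left_eq_map, mul_comm]

/-- The ring identity behind the inductive step of `C_dvd_reflectDefect`. Here `F₁, R₁, G₁, H₁`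
stand for `F(t), F*(t), G(t), G*(t)` and `Fw, Rw, Gw, Hw` for their values at `wt`, where
`G = F'(t^q)` and `G* = F'*(t^q)`; `hE₁` and `hE` are the transformation formula at `t` and at `wt`,
and `hΨ` is the inductive hypothesis for `F'` at `w^q`, with `t ↦ t^q`. -/
theorem dvd_reflectDefect_step {T : Type*} [CommRing T] {D F₁ Fw R₁ Rw G₁ Gw H₁ Hw x v c : T}
    {q d l L L' : ℕ} (hq : q = d + 1) (hL : L = l + q * L')
    (hΨ : D ∣ Gw * H₁ - (v ^ q) ^ (1 + L') * (Hw * G₁))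
    (hE₁ : D ∣ F₁ * (x ^ d * H₁) - c * x ^ l * R₁ * G₁)
    (hE : D ∣ Fw * ((v * x) ^ d * Hw) - c * (v * x) ^ l * Rw * Gw) :
    D ∣ c * v ^ l * (x ^ l * ((Fw * R₁ - v ^ (1 + L) * (Rw * F₁)) * (G₁ * Gw))) := by
  have key : c * v ^ l * (x ^ l * ((Fw * R₁ - v ^ (1 + L) * (Rw * F₁)) * (G₁ * Gw)))
      = F₁ * Fw * x ^ d * v ^ l * (Gw * H₁ - (v ^ q) ^ (1 + L') * (Hw * G₁))
        - v ^ l * Fw * Gw * (F₁ * (x ^ d * H₁) - c * x ^ l * R₁ * G₁)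
        + v ^ (1 + L) * F₁ * G₁ * (Fw * ((v * x) ^ d * Hw) - c * (v * x) ^ l * Rw * Gw) := by
    subst hq hL
    ring
  rw [key]
  exact dvd_add (dvd_sub (dvd_mul_of_dvd_right hΨ _) (dvd_mul_of_dvd_right hE₁ _))
    (dvd_mul_of_dvd_right hE _)

theorem C_dvd_reflectDefect {π : R} {p : ℕ} {l : ℕ → ℕ} {A : ℕ → ℕ → R} (hp : 0 < p)
    (hT : DworkCongruence π p l A) (hA : ∀ i, IsUnit (A i 0)) (e : ℕ) :
    ∀ n i, e ≤ n → ∀ w : S, w ^ p ^ e = 1 →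
      C (algebraMap R S (π ^ (n - e + 1)))
        ∣ reflectDefect (truncPoly (A i) (p ^ n)) (p ^ n - 1) (ofDigitsFrom p l i e) w := by
  induction e with
  | zero =>
    intro n i _ w hw
    rw [pow_zero, pow_one] at hw
    rw [hw, reflectDefect_one]
    exact dvd_zero _
  | succ e ih =>
    intro n i hen w hw
    obtain ⟨c, hc, hE⟩ := hT i n (by omega)
    rw [reflect_expand_truncPoly hp (by omega)] at hE
    set f := truncPoly (A i) (p ^ n)
    set g := truncPoly (A (i + 1)) (p ^ (n - 1))
    have hE₁ := map_dvd (mapRingHom (algebraMap R S)) hE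
    have hEw := map_dvd (aeval (C w * X)) hE
    have hΨ := map_dvd (expand S p)
      (ih (n - 1) (i + 1) (by omega) (w ^ p) (by rw [← pow_mul, ← pow_succ', hw]))
    simp only [reflectDefect, map_sub, map_mul, expand_C, expand_aeval_C_mul_X] at hΨ
    simp only [coe_mapRingHom, map_X, map_C, map_sub, map_mul, map_pow, aeval_C, aeval_X,
      Polynomial.algebraMap_apply, map_expand] at hE₁ hEw hΨ
    rw [show n - 1 - e + 1 = n - e by omega] at hΨ
    have hweaken : C (algebraMap R S π) ^ (n - e) ∣ C (algebraMap R S π) ^ n :=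
      pow_dvd_pow _ (Nat.sub_le n e)
    have hdvd := dvd_reflectDefect_step (Nat.succ_pred_eq_of_pos hp).symm
      (ofDigitsFrom_succ p l i e) hΨ (hweaken.trans hE₁) (hweaken.trans hEw)
    rw [← map_pow C (algebraMap R S π), ← map_pow (algebraMap R S)] at hdvd
    have hunit : IsUnit (C (algebraMap R S c) * C w ^ l i) :=
      ((hc.map (algebraMap R S)).map C).mul
        (((IsUnit.of_pow_eq_one hw (pow_pos hp _).ne').map C).pow _)
    have hW : IsUnit
        ((expand S p (map (algebraMap R S) g) * aeval (C w * X) (expand R p g)).coeff 0) := by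
      rw [mul_coeff_zero, coeff_expand hp, coeff_aeval_C_mul_X, coeff_expand hp]
      simp only [dvd_zero, if_true, Nat.zero_div, coeff_map, pow_zero, mul_one, g,
        coeff_truncPoly, if_pos (pow_pos hp _)]
      exact ((hA (i + 1)).map (algebraMap R S)).mul ((hA (i + 1)).map (algebraMap R S))
    rw [show n - (e + 1) + 1 = n - e by omega, reflectDefect, map_pow C]
    exact C_dvd_of_C_dvd_mul_of_isUnit_coeff_zero hW
      (C_dvd_of_C_dvd_X_pow_mul _ ((hunit.dvd_mul_left).1 hdvd))

end Defect

section GroupRing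

open AddMonoidAlgebra

variable {R G : Type*} [CommRing R] [AddCommMonoid G]

theorem algebraMap_mul_single_pow (r : R) (g : G) (i : ℕ) :
    algebraMap R R[G] r * single g 1 ^ i = single (i • g) r := by
  rw [single_pow, one_pow, coe_algebraMap, Function.comp_apply, Algebra.algebraMap_self,
    RingHom.id_apply, single_mul_single, zero_add, mul_one]

theorem coeff_coeff_reflectDefect_single [DecidableEq G] (b : ℕ → R) {N m : ℕ} (hm : m < N)
    (L : ℕ) (g k : G) :
    ((reflectDefect (truncPoly b N) (N - 1) L (single g (1 : R))).coeff m).coeff k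
      = ∑ i ∈ Finset.range (m + 1), (if i • g = k then b i * b (N - 1 - (m - i)) else 0)
        - ∑ j ∈ Finset.range (m + 1),
            (if (1 + L + j) • g = k then b (N - 1 - j) * b (m - j) else 0) := by
  rw [reflectDefect, Polynomial.coeff_sub, coeff_C_mul, Polynomial.coeff_mul,
    Polynomial.coeff_mul, Finset.Nat.sum_antidiagonal_eq_sum_range_succ_mk,
    Finset.Nat.sum_antidiagonal_eq_sum_range_succ_mk, Finset.mul_sum, AddMonoidAlgebra.coeff_sub,
    Finsupp.sub_apply, AddMonoidAlgebra.coeff_sum, AddMonoidAlgebra.coeff_sum,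
    Finsupp.finsetSum_apply, Finsupp.finsetSum_apply]
  congr 1 <;> refine Finset.sum_congr rfl fun i hi => ?_ <;>
    have hi : i ≤ m := Finset.mem_range_succ_iff.1 hi
  · rw [coeff_aeval_C_mul_X, Polynomial.coeff_map, coeff_truncPoly, if_pos (by omega),
      coeff_reflect_truncPoly b (by omega), algebraMap_mul_single_pow, coe_algebraMap,
      Function.comp_apply, Algebra.algebraMap_self, RingHom.id_apply, single_mul_single, add_zero,
      coeff_single, Finsupp.single_apply]
  · rw [coeff_aeval_C_mul_X, Polynomial.coeff_map, coeff_truncPoly, if_pos (by omega),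
      coeff_reflect_truncPoly b (by omega), algebraMap_mul_single_pow, coe_algebraMap,
      Function.comp_apply, Algebra.algebraMap_self, RingHom.id_apply, single_mul_single, add_zero,
      single_pow, one_pow, single_mul_single, one_mul, ← add_nsmul, coeff_single,
      Finsupp.single_apply]

end GroupRing

theorem dvd_coeff_coeff_of_C_algebraMap_dvd {R G : Type*} [CommRing R] [AddCommMonoid G] {x : R}
    {P : (AddMonoidAlgebra R G)[X]} (h : C (algebraMap R (AddMonoidAlgebra R G) x) ∣ P)
    (m : ℕ) (g : G) : x ∣ (P.coeff m).coeff g := by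
  obtain ⟨Q, rfl⟩ := h
  rw [coeff_C_mul, ← Algebra.smul_def, AddMonoidAlgebra.coeff_smul_apply, smul_eq_mul]
  exact dvd_mul_right _ _

theorem PadicInt.pow_dvd_natCast_add_iff {p : ℕ} [Fact p.Prime] {a y : ℤ_[p]} {e n L j k : ℕ}
    (he : e ≤ n) (hj : j < p ^ n) (hL : a + L = p ^ e * y) :
    (p : ℤ_[p]) ^ e ∣ ((p ^ n - j - 1 : ℕ) : ℤ_[p]) + k + a
      ↔ ((1 + L + j : ℕ) : ZMod (p ^ e)) = k := by
  have hsplit : ((p ^ n - j - 1 : ℕ) : ℤ_[p]) + k + a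
      = (((p ^ n - j - 1 + k : ℕ) - L : ℤ) : ℤ_[p]) + p ^ e * y := by
    push_cast
    linear_combination hL
  have hpn : (p : ZMod (p ^ e)) ^ n = 0 := by
    rw [← Nat.cast_pow, ZMod.natCast_eq_zero_iff]
    exact pow_dvd_pow p he
  rw [hsplit, dvd_add_left (dvd_mul_right _ _), PadicInt.pow_p_dvd_int_iff, ← Nat.cast_pow,
    ← ZMod.intCast_zmod_eq_zero_iff_dvd, Nat.sub_sub]
  push_cast [Nat.cast_sub (show j + 1 ≤ p ^ n by omega)]
  constructor <;> intro h <;> linear_combination hpn - h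

theorem PadicInt.pow_dvd_sum_sub_sum_of_dworkCongruence {p : ℕ} [Fact p.Prime] {a : ℕ → ℤ_[p]}
    {l : ℕ → ℕ} {A : ℕ → ℕ → ℤ_[p]} (hla : ∀ i, a i + (l i : ℤ_[p]) = (p : ℤ_[p]) * a (i + 1))
    (hT : DworkCongruence (p : ℤ_[p]) p l A) (hA : ∀ i, IsUnit (A i 0)) {n d m : ℕ} (k : ℕ)
    (hd : d ≤ n) (hm : m < p ^ n) :
    (p : ℤ_[p]) ^ (d + 1) ∣
      (∑ i ∈ Finset.range (m + 1),
          if i % p ^ (n - d) = k % p ^ (n - d) then A 0 i * A 0 (p ^ n - (m - i) - 1) else 0)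
        - ∑ j ∈ Finset.range (m + 1),
            if (p : ℤ_[p]) ^ (n - d) ∣ ((p ^ n - j - 1 : ℕ) : ℤ_[p]) + k + a 0 then
              A 0 (m - j) * A 0 (p ^ n - j - 1) else 0 := by
  have hp : 0 < p := (Fact.out : p.Prime).pos
  set e := n - d
  have hu : (AddMonoidAlgebra.single 1 1 : AddMonoidAlgebra ℤ_[p] (ZMod (p ^ e))) ^ p ^ e = 1 := by
    rw [AddMonoidAlgebra.single_pow, nsmul_one, ZMod.natCast_self, one_pow,
      AddMonoidAlgebra.one_def]
  have key := dvd_coeff_coeff_of_C_algebraMap_dvd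
    (C_dvd_reflectDefect (S := AddMonoidAlgebra ℤ_[p] (ZMod (p ^ e))) hp hT hA e n 0
      (Nat.sub_le n d) _ hu) m (k : ZMod (p ^ e))
  rw [coeff_coeff_reflectDefect_single _ hm, show n - e + 1 = d + 1 by omega] at key
  convert key using 2 <;> refine Finset.sum_congr rfl fun j hj => ?_
  · exact if_congr (by rw [nsmul_one, ZMod.natCast_eq_natCast_iff'])
      (by rw [Nat.sub_right_comm]) rfl
  · have hj : j < p ^ n := by rw [Finset.mem_range] at hj; omega
    exact if_congr (by rw [nsmul_one, PadicInt.pow_dvd_natCast_add_iff (Nat.sub_le n d) hj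
      (add_ofDigitsFrom hla 0 e)]) (by rw [mul_comm, Nat.sub_right_comm]) rfl

theorem coefficient_congruence_of_dwork_transformation_general
    (p s : ℕ) [Fact p.Prime]
    -- `a i` is the `i`-th iterated Dwork prime `a^{(i)}` of `a = a 0`
    (a : ℕ → ℤ_[p])
    (l : ℕ → ℕ)
    (hla : ∀ i, a i + (l i : ℤ_[p]) = (p : ℤ_[p]) * a (i + 1))
    -- `A i k` is the `k`-th coefficient of `F_{a^{(i)}}(t)`
    (A : ℕ → ℕ → ℤ_[p])
    (hA : ∀ i k, (A i k : ℚ_[p]) =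
      ((ascPochhammer ℚ_[p] k).eval (a i : ℚ_[p]) / (k.factorial : ℚ_[p])) ^ s)
    -- the transformation formula (Conjecture 4.7) for every `a^{(i)}`
    (htrans : ∀ i n : ℕ, 1 ≤ n → ∃ ε : ℤ_[p], (ε = 1 ∨ ε = -1) ∧
      ∀ j : ℕ, (p : ℤ_[p]) ^ n ∣
        (((∑ k ∈ Finset.range (p ^ n), C (A i k) * X ^ k)
            * Polynomial.reflect (p ^ n - 1)
                (∑ k ∈ Finset.range (p ^ n),
                  C (if p ∣ k then A (i + 1) (k / p) else 0) * X ^ k)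
          - C (ε * ((-1 : ℤ_[p]) ^ s) ^ (l i)) * X ^ (l i)
            * Polynomial.reflect (p ^ n - 1)
                (∑ k ∈ Finset.range (p ^ n), C (A i k) * X ^ k)
            * (∑ k ∈ Finset.range (p ^ n),
                C (if p ∣ k then A (i + 1) (k / p) else 0) * X ^ k)).coeff j)) :
    ∀ n d m k : ℕ, 1 ≤ n → d ≤ n → m ≤ p ^ n - 1 →
      (p : ℤ_[p]) ^ (d + 1) ∣
        ((∑ i ∈ Finset.range (m + 1),
            if i % p ^ (n - d) = k % p ^ (n - d) then
              A 0 i * A 0 (p ^ n - (m - i) - 1) else 0)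
          - ∑ j ∈ Finset.range (m + 1),
              if (p : ℤ_[p]) ^ (n - d) ∣
                  (((p ^ n - j - 1 : ℕ) : ℤ_[p]) + (k : ℤ_[p]) + a 0) then
                A 0 (m - j) * A 0 (p ^ n - j - 1) else 0) := by
  intro n d m k _ hd hm
  have hp : 0 < p := (Fact.out : p.Prime).pos
  have hA₀ : ∀ i, IsUnit (A i 0) := fun i => by
    rw [show A i 0 = 1 from Subtype.ext (by simpa using hA i 0)]
    exact isUnit_one
  have hT : DworkCongruence (p : ℤ_[p]) p l A := by
    intro i n hn
    obtain ⟨ε, hε, h⟩ := htrans i n hn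
    have hG : (∑ k ∈ Finset.range (p ^ n), C (if p ∣ k then A (i + 1) (k / p) else 0) * X ^ k)
        = expand ℤ_[p] p (truncPoly (A (i + 1)) (p ^ (n - 1))) := by
      rw [← truncPoly_ite_dvd hp, ← pow_succ', Nat.sub_add_cancel hn]
      rfl
    rw [hG] at h
    refine ⟨_, IsUnit.mul ?_ ((isUnit_neg_one.pow s).pow _), (C_dvd_iff_dvd_coeff _ _).2 h⟩
    rcases hε with rfl | rfl
    exacts [isUnit_one, isUnit_neg_one]
  have hm' : m < p ^ n := by have := pow_pos hp n; omega
  exact PadicInt.pow_dvd_sum_sub_sum_of_dworkCongruence hla hT hA₀ k hd hm'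

/-- Lemma 4.8 of the paper: assume the transformation formula
`𝓕^Dw_{a^{(i)}}(t) = ±((-1)^s t)^{l_i} 𝓕^Dw_{a^{(i)}}(t⁻¹)` (Conjecture 4.7)
holds for every iterated Dwork prime `a^{(i)}`, in the sense that for every
`n ≥ 1` the truncations `F_i := [F_{a^{(i)}}(t)]_{<p^n}`,
`G_i := [F_{a^{(i+1)}}(t^p)]_{<p^n}` satisfy the cross-multiplied Laurent
congruence `F_i(t)·t^{p^n-1}G_i(t⁻¹) ≡ ε·((-1)^s)^{l_i} t^{l_i}·
t^{p^n-1}F_i(t⁻¹)·G_i(t) mod p^n` for some sign `ε = ±1` (here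
`t^{p^n-1}f(t⁻¹)` is `Polynomial.reflect (p^n-1)`).  Then for all `n ≥ 1`,
`0 ≤ d ≤ n`, `0 ≤ m ≤ p^n - 1` and `k ≥ 0`:
`∑_{i ≡ k mod p^{n-d}, i+j=m} A_i A_{p^n-j-1}
  ≡ ∑_{p^n-j'-1 ≡ -k-a mod p^{n-d}, i'+j'=m} A_{i'} A_{p^n-j'-1} mod p^{d+1}`. -/
theorem coefficient_congruence_of_dwork_transformation
    (p s : ℕ) [Fact p.Prime] (hs : 1 ≤ s)
    -- `a i` is the `i`-th iterated Dwork prime `a^{(i)}` of `a = a 0`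
    (a : ℕ → ℤ_[p]) (ha : ∀ m : ℕ, a 0 ≠ -(m : ℤ_[p]))
    (l : ℕ → ℕ) (hl : ∀ i, l i < p)
    (hla : ∀ i, a i + (l i : ℤ_[p]) = (p : ℤ_[p]) * a (i + 1))
    -- `A i k` is the `k`-th coefficient of `F_{a^{(i)}}(t)`
    (A : ℕ → ℕ → ℤ_[p])
    (hA : ∀ i k, (A i k : ℚ_[p]) =
      ((ascPochhammer ℚ_[p] k).eval (a i : ℚ_[p]) / (k.factorial : ℚ_[p])) ^ s)
    -- the transformation formula (Conjecture 4.7) for every `a^{(i)}`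
    (htrans : ∀ i n : ℕ, 1 ≤ n → ∃ ε : ℤ_[p], (ε = 1 ∨ ε = -1) ∧
      ∀ j : ℕ, (p : ℤ_[p]) ^ n ∣
        (((∑ k ∈ Finset.range (p ^ n), C (A i k) * X ^ k)
            * Polynomial.reflect (p ^ n - 1)
                (∑ k ∈ Finset.range (p ^ n),
                  C (if p ∣ k then A (i + 1) (k / p) else 0) * X ^ k)
          - C (ε * ((-1 : ℤ_[p]) ^ s) ^ (l i)) * X ^ (l i)
            * Polynomial.reflect (p ^ n - 1)
                (∑ k ∈ Finset.range (p ^ n), C (A i k) * X ^ k)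
            * (∑ k ∈ Finset.range (p ^ n),
                C (if p ∣ k then A (i + 1) (k / p) else 0) * X ^ k)).coeff j)) :
    ∀ n d m k : ℕ, 1 ≤ n → d ≤ n → m ≤ p ^ n - 1 →
      (p : ℤ_[p]) ^ (d + 1) ∣
        ((∑ i ∈ Finset.range (m + 1),
            if i % p ^ (n - d) = k % p ^ (n - d) then
              A 0 i * A 0 (p ^ n - (m - i) - 1) else 0)
          - ∑ j ∈ Finset.range (m + 1),
              if (p : ℤ_[p]) ^ (n - d) ∣
                  (((p ^ n - j - 1 : ℕ) : ℤ_[p]) + (k : ℤ_[p]) + a 0) then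
                A 0 (m - j) * A 0 (p ^ n - j - 1) else 0) :=
  coefficient_congruence_of_dwork_transformation_general p s a l hla A hA htrans

end
end
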